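/- Let γ : ℝ → ℝ² be a smooth unit-speed self-shrinking curve. Then either the image of γ is contained in a straight line through the origin, or H(t)² > 0 for every t and sup_t |γ(t)|² < ∞. -/

import Mathlib

/-!
For a unit-speed curve the Frenet equations read `γ″ = -H n` and `n′ = H γ′`. The shrinker
equation `H = ⟨γ, n⟩ / 2` then gives `H′ = H ⟨γ, γ′⟩ / 2`, so `H² exp (-|γ|² / 2)` is constant.
If this constant is zero, `H ≡ 0`, so `γ′` is constant and `⟨γ, n⟩ = 0` puts `γ` on the line
spanned by `γ′`. Otherwise `H² = A exp (|γ|² / 2)` with `A > 0`, while Cauchy–Schwarz gives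
`4 H² ≤ |γ|²`; as the exponential outgrows the linear function, `|γ|² ≤ 2 / A`.
-/

noncomputable section
open Real MeasureTheory
open scoped RealInnerProductSpace

abbrev E2 := EuclideanSpace ℝ (Fin 2)

/-- The unit normal of a unit-speed plane curve: `γ′` rotated by `−π/2`. -/
def normal (γ : ℝ → E2) (t : ℝ) : E2 := WithLp.toLp 2 ![deriv γ t 1, -(deriv γ t 0)]

/-- The curvature `H = −⟨γ″, n⟩` of a unit-speed plane curve. -/
def curv (γ : ℝ → E2) (t : ℝ) : ℝ := -⟪deriv (deriv γ) t, normal γ t⟫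

def rot : E2 →L[ℝ] E2 := LinearMap.toContinuousLinearMap
  { toFun := fun v => !₂[v 1, -v 0]
    map_add' := fun v w => by ext i; fin_cases i <;> simp [add_comm]
    map_smul' := fun c v => by ext i; fin_cases i <;> simp }

@[simp] lemma rot_apply_zero (v : E2) : rot v 0 = v 1 := rfl
@[simp] lemma rot_apply_one (v : E2) : rot v 1 = -v 0 := rfl

lemma inner_eq_mul_add_mul (v w : E2) : ⟪v, w⟫ = v 0 * w 0 + v 1 * w 1 := by
  simp [PiLp.inner_apply, Fin.sum_univ_two, mul_comm]

lemma rot_rot (v : E2) : rot (rot v) = -v := by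
  ext i; fin_cases i <;> simp

lemma inner_rot_self (v : E2) : ⟪rot v, v⟫ = 0 := by
  rw [inner_eq_mul_add_mul, rot_apply_zero, rot_apply_one]; ring

lemma norm_rot (v : E2) : ‖rot v‖ = ‖v‖ := by
  simp [EuclideanSpace.norm_eq, Fin.sum_univ_two, add_comm]

lemma eq_inner_smul_add_inner_rot_smul {v : E2} (hv : ‖v‖ = 1) (w : E2) :
    w = ⟪v, w⟫ • v + ⟪rot v, w⟫ • rot v := by
  have h : v 0 ^ 2 + v 1 ^ 2 = 1 := by
    have h := real_inner_self_eq_norm_sq v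
    rw [hv, inner_eq_mul_add_mul] at h
    linear_combination h
  ext i
  fin_cases i <;>
    simp only [Fin.zero_eta, Fin.mk_one, PiLp.add_apply, PiLp.smul_apply, smul_eq_mul,
      inner_eq_mul_add_mul, rot_apply_zero, rot_apply_one] <;>
    linear_combination (-w _) * h

lemma normal_eq_rot (γ : ℝ → E2) (t : ℝ) : normal γ t = rot (deriv γ t) := rfl

lemma inner_deriv_eq_zero_of_norm_eq {F : Type*} [NormedAddCommGroup F] [InnerProductSpace ℝ F]
    {f : ℝ → F} {r : ℝ} (hf : Differentiable ℝ f) (hr : ∀ t, ‖f t‖ = r) (t : ℝ) :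
    ⟪f t, deriv f t⟫ = 0 := by
  have h := (hf t).hasDerivAt.norm_sq
  simp only [hr] at h
  linarith [h.unique (hasDerivAt_const t (r ^ 2))]

section UnitSpeed

variable {γ : ℝ → E2}

lemma deriv_deriv_eq_neg_curv_smul_normal (hdiff' : Differentiable ℝ (deriv γ))
    (hunit : ∀ t, ‖deriv γ t‖ = 1) (t : ℝ) :
    deriv (deriv γ) t = -curv γ t • normal γ t := by
  rw [eq_inner_smul_add_inner_rot_smul (hunit t) (deriv (deriv γ) t),
    inner_deriv_eq_zero_of_norm_eq hdiff' hunit, curv, ← normal_eq_rot, real_inner_comm]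
  simp

lemma hasDerivAt_normal (hdiff' : Differentiable ℝ (deriv γ)) (hunit : ∀ t, ‖deriv γ t‖ = 1)
    (t : ℝ) : HasDerivAt (normal γ) (curv γ t • deriv γ t) t := by
  have h := rot.hasFDerivAt.comp_hasDerivAt t (hdiff' t).hasDerivAt
  rw [deriv_deriv_eq_neg_curv_smul_normal hdiff' hunit, normal_eq_rot, map_smul, rot_rot,
    smul_neg, neg_smul, neg_neg] at h
  exact h

end UnitSpeed

section SelfShrinker

variable {γ : ℝ → E2}

lemma hasDerivAt_curv_of_selfShrinker (hdiff : Differentiable ℝ γ)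
    (hdiff' : Differentiable ℝ (deriv γ)) (hunit : ∀ t, ‖deriv γ t‖ = 1)
    (hshrink : ∀ t, curv γ t = ⟪γ t, normal γ t⟫ / 2) (t : ℝ) :
    HasDerivAt (curv γ) (curv γ t * ⟪γ t, deriv γ t⟫ / 2) t := by
  have h := ((hdiff t).hasDerivAt.inner ℝ (hasDerivAt_normal hdiff' hunit t)).div_const 2
  rw [← funext hshrink, normal_eq_rot, real_inner_comm (rot _), inner_rot_self, add_zero,
    real_inner_smul_right] at h
  exact h

lemma curv_sq_mul_exp_eq (hdiff : Differentiable ℝ γ)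
    (hdiff' : Differentiable ℝ (deriv γ)) (hunit : ∀ t, ‖deriv γ t‖ = 1)
    (hshrink : ∀ t, curv γ t = ⟪γ t, normal γ t⟫ / 2) (t s : ℝ) :
    curv γ t ^ 2 * exp (-‖γ t‖ ^ 2 / 2) = curv γ s ^ 2 * exp (-‖γ s‖ ^ 2 / 2) := by
  have h (u : ℝ) : HasDerivAt (fun u => curv γ u ^ 2 * exp (-‖γ u‖ ^ 2 / 2)) 0 u := by
    have h := ((hasDerivAt_curv_of_selfShrinker hdiff hdiff' hunit hshrink u).fun_pow 2).fun_mul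
      (((hdiff u).hasDerivAt.norm_sq.fun_neg.div_const 2).exp)
    refine h.congr_deriv ?_
    push_cast
    ring
  exact is_const_of_deriv_eq_zero (fun u => (h u).differentiableAt) (fun u => (h u).deriv) t s

lemma four_mul_curv_sq_le (hunit : ∀ t, ‖deriv γ t‖ = 1)
    (hshrink : ∀ t, curv γ t = ⟪γ t, normal γ t⟫ / 2) (t : ℝ) :
    4 * curv γ t ^ 2 ≤ ‖γ t‖ ^ 2 := by
  have h := abs_real_inner_le_norm (γ t) (normal γ t)
  rw [normal_eq_rot, norm_rot, hunit, mul_one, ← normal_eq_rot] at h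
  calc 4 * curv γ t ^ 2 = |⟪γ t, normal γ t⟫| ^ 2 := by rw [sq_abs, hshrink]; ring
    _ ≤ ‖γ t‖ ^ 2 := pow_le_pow_left₀ (abs_nonneg _) h 2

lemma exists_line_of_curv_eq_zero (hdiff' : Differentiable ℝ (deriv γ))
    (hunit : ∀ t, ‖deriv γ t‖ = 1) (hshrink : ∀ t, curv γ t = ⟪γ t, normal γ t⟫ / 2)
    (hH : ∀ t, curv γ t = 0) : ∃ w : E2, w ≠ 0 ∧ ∀ t : ℝ, ∃ c : ℝ, γ t = c • w := by
  have hconst (t : ℝ) : deriv γ t = deriv γ 0 :=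
    is_const_of_deriv_eq_zero hdiff'
      (fun s => by rw [deriv_deriv_eq_neg_curv_smul_normal hdiff' hunit, hH]; simp) t 0
  refine ⟨deriv γ 0, norm_ne_zero_iff.mp (by simp [hunit]), fun t => ⟨⟪deriv γ 0, γ t⟫, ?_⟩⟩
  have hn : ⟪rot (deriv γ 0), γ t⟫ = 0 := by
    rw [← hconst t, ← normal_eq_rot, real_inner_comm]
    linarith [hshrink t, hH t]
  conv_lhs => rw [eq_inner_smul_add_inner_rot_smul (hunit 0) (γ t)]
  simp [hn]

end SelfShrinker

lemma le_two_div_of_mul_exp_neg_half_eq {a c x : ℝ} (ha : 0 < a) (hac : c * exp (-x / 2) = a)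
    (hcx : 4 * c ≤ x) : x ≤ 2 / a := by
  have hc : c = a * exp (x / 2) := by
    rw [← hac, mul_assoc, ← exp_add, neg_div, neg_add_cancel, exp_zero, mul_one]
  have hx : 0 < x := by nlinarith [exp_pos (x / 2)]
  have h := pow_div_factorial_le_exp (x / 2) (by positivity) 2
  rw [le_div_iff₀ ha]
  norm_num [Nat.factorial] at h
  nlinarith

/-- A smooth unit-speed self-shrinking curve in the plane either lies on
a straight line through the origin, or has nowhere-vanishing curvature and bounded image. -/
theorem stmt17 (γ : ℝ → E2) (hγ : ContDiff ℝ (⊤ : ℕ∞) γ)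
    (hunit : ∀ t, ‖deriv γ t‖ = 1)
    (hshrink : ∀ t, curv γ t = ⟪γ t, normal γ t⟫ / 2) :
    (∃ w : E2, w ≠ 0 ∧ ∀ t : ℝ, ∃ c : ℝ, γ t = c • w) ∨
    ((∀ t : ℝ, 0 < curv γ t ^ 2) ∧ ∃ M : ℝ, ∀ t : ℝ, ‖γ t‖ ^ 2 ≤ M) := by
  have hdiff : Differentiable ℝ γ := hγ.differentiable (by simp)
  have hdiff' : Differentiable ℝ (deriv γ) :=
    (contDiff_infty_iff_deriv.mp hγ).2.differentiable (by simp)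
  have hconst := curv_sq_mul_exp_eq hdiff hdiff' hunit hshrink
  by_cases h0 : curv γ 0 = 0
  · left
    refine exists_line_of_curv_eq_zero hdiff' hunit hshrink fun t => ?_
    simpa [h0] using hconst t 0
  · right
    have hA : 0 < curv γ 0 ^ 2 * exp (-‖γ 0‖ ^ 2 / 2) := by positivity
    refine ⟨fun t => ?_, _, fun t =>
      le_two_div_of_mul_exp_neg_half_eq hA (hconst t 0) (four_mul_curv_sq_le hunit hshrink t)⟩
    exact (mul_pos_iff_of_pos_right (exp_pos _)).mp (hA.trans_eq (hconst t 0).symm)
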